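/- The probability p_2 = 3·∫_0^1 ∫_0^1 (1-a)^3·(3 - (1-a)(3-b))^2/(3 - (1-a)(2-b))^3 db da equals (5319/16)·ln 3 - 350·ln 2 - 245/2. -/

import Mathlib

open MeasureTheory Real

/-!
With `c = 1 - a`, the substitution `t = 3 - c (2 - b) = c b + (3 - 2c)` turns the inner integral
into `c² ∫_{1+2a}^{2+a} (t - c)² / t³ dt`, whose primitive in `t` is
`log t + 2c/t - c²/(2t²)`. The resulting integrand in `a` is elementary; its primitive
`outerPrimitive` was found by computer algebra and is checked by differentiation.
-/

noncomputable def innerPrimitive (c t : ℝ) : ℝ :=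
  log t + 2 * c / t - c ^ 2 / (2 * t ^ 2)

lemma hasDerivAt_innerPrimitive (c : ℝ) {t : ℝ} (ht : t ≠ 0) :
    HasDerivAt (innerPrimitive c) ((t - c) ^ 2 / t ^ 3) t := by
  have h := (((hasDerivAt_id' t).log ht).fun_add
    ((hasDerivAt_const t (2 * c)).fun_div (hasDerivAt_id' t) ht)).fun_sub
    ((hasDerivAt_const t (c ^ 2)).fun_div (((hasDerivAt_id' t).fun_pow 2).const_mul 2)
      (by positivity))
  refine h.congr_deriv ?_
  field_simp
  ring

lemma integral_sq_sub_div_cube (c : ℝ) {p q : ℝ} (hp : 0 < p) (hq : 0 < q) :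
    ∫ t in p..q, (t - c) ^ 2 / t ^ 3 = innerPrimitive c q - innerPrimitive c p := by
  have hpos : ∀ t ∈ Set.uIcc p q, 0 < t := fun t ht =>
    lt_of_lt_of_le (lt_min hp hq) ht.1
  refine intervalIntegral.integral_eq_sub_of_hasDerivAt
    (fun t ht => hasDerivAt_innerPrimitive c (hpos t ht).ne') ?_
  refine ContinuousOn.intervalIntegrable (.div (by fun_prop) (by fun_prop) ?_)
  exact fun t ht => (pow_pos (hpos t ht) 3).ne'

lemma inner_integral_eq (a : ℝ) (ha : -1 / 2 < a) :
    ∫ b in (0:ℝ)..1, (1 - a) ^ 3 * (3 - (1 - a) * (3 - b)) ^ 2 / (3 - (1 - a) * (2 - b)) ^ 3 =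
      (1 - a) ^ 2 * (innerPrimitive (1 - a) (2 + a) - innerPrimitive (1 - a) (1 + 2 * a)) := by
  set c := 1 - a
  have hsubst : ∀ b : ℝ, c ^ 3 * (3 - c * (3 - b)) ^ 2 / (3 - c * (2 - b)) ^ 3 =
      c ^ 2 * (c * (((c * b + (3 - 2 * c)) - c) ^ 2 / (c * b + (3 - 2 * c)) ^ 3)) := by
    intro b; ring
  simp_rw [hsubst, intervalIntegral.integral_const_mul]
  rw [← smul_eq_mul c, intervalIntegral.smul_integral_comp_mul_add (fun t => (t - c) ^ 2 / t ^ 3)]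
  have hlo : c * 0 + (3 - 2 * c) = 1 + 2 * a := by ring
  have hhi : c * 1 + (3 - 2 * c) = 2 + a := by ring
  rw [hlo, hhi, integral_sq_sub_div_cube c (by linarith) (by linarith)]

noncomputable def outerPrimitive (a : ℝ) : ℝ :=
  (117 - (1 - a) ^ 3 / 3) * log (2 + a) + ((1 - a) ^ 3 / 3 - 99 / 16) * log (1 + 2 * a)
    - (4175 / 192 + 1269 / 32 * a - 83 / 16 * a ^ 2 + 11 / 24 * a ^ 3)
    + 81 / (2 * (2 + a)) - 81 / (64 * (1 + 2 * a))

lemma hasDerivAt_outerPrimitive {a : ℝ} (ha : -1 / 2 < a) :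
    HasDerivAt outerPrimitive
      ((1 - a) ^ 2 * (innerPrimitive (1 - a) (2 + a) - innerPrimitive (1 - a) (1 + 2 * a))) a := by
  have hu : HasDerivAt (fun x => 2 + x) 1 a := (hasDerivAt_id' a).const_add 2
  have hv : HasDerivAt (fun x => 1 + 2 * x) (2 * 1) a :=
    ((hasDerivAt_id' a).const_mul 2).const_add 1
  have hu0 : 2 + a ≠ 0 := by linarith
  have hv0 : 1 + 2 * a ≠ 0 := by linarith
  have hw := (((hasDerivAt_id' a).const_sub 1).fun_pow 3).div_const 3
  have hpoly := ((((hasDerivAt_id' a).const_mul (1269 / 32)).const_add (4175 / 192)).fun_sub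
    (((hasDerivAt_id' a).fun_pow 2).const_mul (83 / 16))).fun_add
    (((hasDerivAt_id' a).fun_pow 3).const_mul (11 / 24))
  have h := (((((hw.const_sub 117).fun_mul (hu.log hu0)).fun_add
    ((hw.sub_const (99 / 16)).fun_mul (hv.log hv0))).fun_sub hpoly).fun_add
    ((hasDerivAt_const a 81).fun_div (hu.const_mul 2) (by positivity))).fun_sub
    ((hasDerivAt_const a 81).fun_div (hv.const_mul 64) (by positivity))
  refine h.congr_deriv ?_
  simp only [innerPrimitive]
  -- `field_simp` rewrites `1 + 2 * a` as `1 + a * 2` before looking for a nonvanishing proof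
  have : 1 + a * 2 ≠ 0 := by linarith
  field_simp
  ring

lemma continuousOn_outerIntegrand :
    ContinuousOn (fun a : ℝ =>
      (1 - a) ^ 2 * (innerPrimitive (1 - a) (2 + a) - innerPrimitive (1 - a) (1 + 2 * a)))
      (Set.Icc 0 1) := by
  unfold innerPrimitive
  fun_prop (disch := intro x (hx : x ∈ Set.Icc (0:ℝ) 1); have := hx.1; positivity)

lemma three_mul_outerPrimitive_sub :
    3 * (outerPrimitive 1 - outerPrimitive 0) =
      5319 / 16 * log 3 - 350 * log 2 - 245 / 2 := by
  norm_num [outerPrimitive]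
  ring

theorem stit_p2_value :
    3 * (∫ a in (0:ℝ)..1, ∫ b in (0:ℝ)..1,
        (1 - a) ^ 3 * (3 - (1 - a) * (3 - b)) ^ 2 / (3 - (1 - a) * (2 - b)) ^ 3) =
      (5319 / 16) * Real.log 3 - 350 * Real.log 2 - 245 / 2 := by
  have hIcc : Set.uIcc (0:ℝ) 1 = Set.Icc 0 1 := Set.uIcc_of_le zero_le_one
  have hdom : ∀ a ∈ Set.uIcc (0:ℝ) 1, -1 / 2 < a := fun a ha => by
    rw [hIcc] at ha
    linarith [ha.1]
  rw [intervalIntegral.integral_congr fun a ha => inner_integral_eq a (hdom a ha),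
    intervalIntegral.integral_eq_sub_of_hasDerivAt
      (fun a ha => hasDerivAt_outerPrimitive (hdom a ha))
      (hIcc ▸ continuousOn_outerIntegrand).intervalIntegrable]
  exact three_mul_outerPrimitive_sub
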